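/- arXiv:1511.04648 — 3 statements merged into one kernel-verified Lean document; each statement's English description precedes it below -/
import Mathlib

section
/- Generalized Rolle's theorem: Let f be real-valued and continuous on [a,b] with f(a) = f(b). Suppose that for every x in (a,b), both one-sided derivatives f'(x+) = lim_{h→0+} (f(x+h)-f(x))/h and f'(x-) = lim_{h→0-} (f(x+h)-f(x))/h exist. Then there exists c in (a,b) such that one of f'(c+), f'(c-) is ≥ 0 and the other is ≤ 0. -/
open Set

section OneSidedFermat

variable {f : ℝ → ℝ} {a f' : ℝ}

theorem IsLocalMaxOn.hasDerivWithinAt_Ici_nonpos (h : IsLocalMaxOn f (Ici a) a)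
    (hf : HasDerivWithinAt f f' (Ici a) a) : f' ≤ 0 := by
  have hcone : (1 : ℝ) ∈ posTangentConeAt (Ici a) a :=
    mem_posTangentConeAt_of_segment_subset <|
      (segment_subset_Icc (by linarith)).trans Icc_subset_Ici_self
  simpa using h.hasFDerivWithinAt_nonpos hf.hasFDerivWithinAt hcone

theorem IsLocalMaxOn.hasDerivWithinAt_Iic_nonneg (h : IsLocalMaxOn f (Iic a) a)
    (hf : HasDerivWithinAt f f' (Iic a) a) : 0 ≤ f' := by
  have hcone : (-1 : ℝ) ∈ posTangentConeAt (Iic a) a :=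
    mem_posTangentConeAt_of_segment_subset <| by
      rw [segment_symm]
      exact (segment_subset_Icc (by linarith)).trans Icc_subset_Iic_self
  simpa using h.hasFDerivWithinAt_nonpos hf.hasFDerivWithinAt hcone

theorem IsLocalMinOn.hasDerivWithinAt_Ici_nonneg (h : IsLocalMinOn f (Ici a) a)
    (hf : HasDerivWithinAt f f' (Ici a) a) : 0 ≤ f' := by
  simpa using h.neg.hasDerivWithinAt_Ici_nonpos hf.neg

theorem IsLocalMinOn.hasDerivWithinAt_Iic_nonpos (h : IsLocalMinOn f (Iic a) a)
    (hf : HasDerivWithinAt f f' (Iic a) a) : f' ≤ 0 := by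
  simpa using h.neg.hasDerivWithinAt_Iic_nonneg hf.neg

end OneSidedFermat

theorem generalized_rolle (f : ℝ → ℝ) (a b : ℝ) (hab : a < b)
    (hf : ContinuousOn f (Set.Icc a b)) (hfab : f a = f b)
    (dp dm : ℝ → ℝ)
    (hdp : ∀ x ∈ Set.Ioo a b, HasDerivWithinAt f (dp x) (Set.Ici x) x)
    (hdm : ∀ x ∈ Set.Ioo a b, HasDerivWithinAt f (dm x) (Set.Iic x) x) :
    ∃ c ∈ Set.Ioo a b, (0 ≤ dp c ∧ dm c ≤ 0) ∨ (dp c ≤ 0 ∧ 0 ≤ dm c) := by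
  obtain ⟨c, hc, hextr⟩ := exists_Ioo_extr_on_Icc hab hf hfab
  refine ⟨c, hc, ?_⟩
  obtain hmin | hmax : IsLocalMin f c ∨ IsLocalMax f c :=
    hextr.isLocalExtr (Icc_mem_nhds hc.1 hc.2)
  · exact .inl ⟨(hmin.on _).hasDerivWithinAt_Ici_nonneg (hdp c hc),
      (hmin.on _).hasDerivWithinAt_Iic_nonpos (hdm c hc)⟩
  · exact .inr ⟨(hmax.on _).hasDerivWithinAt_Ici_nonpos (hdp c hc),
      (hmax.on _).hasDerivWithinAt_Iic_nonneg (hdm c hc)⟩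
end

section
/- Let φ_{n+1}(ξ) = ∫_{-1}^ξ w(t) L_n(t) dt for n ≥ 1, where w = 1/β̂ with β̂ piecewise constant positive on [-1,1], and {L_n} orthogonal with respect to weight w. Then ∫_{-1}^1 φ_{n+1}(ξ) v(ξ) dξ = 0 for every polynomial v of degree at most n-2. -/
/-!
Write `φ ξ = ∫_{-1}^ξ w L_n` and let `V` be the antiderivative of `v` with `V(1) = 0`. Integrating
by parts (`φ` is differentiable with `φ' = w L_n` away from the jump of `w`, and `φ(-1) = 0`),
`∫ φ v = -∫ w L_n V`. Since `deg V ≤ deg v + 1 < n`, `V` lies in the span of `L_0, …, L_{n-1}`,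
to each of which `L_n` is `w`-orthogonal.
-/

open MeasureTheory intervalIntegral

/-- The piecewise constant coefficient on the reference interval. -/
noncomputable def betaHat (α βm βp : ℝ) (ξ : ℝ) : ℝ := if ξ ≤ α then βm else βp

open Polynomial Set

namespace Polynomial

variable {K : Type*} [Field K]

noncomputable def antiderivative (p : K[X]) : K[X] :=
  p.sum fun i a => C (a / (i + 1)) * X ^ (i + 1)

theorem derivative_antiderivative [CharZero K] (p : K[X]) : derivative (antiderivative p) = p := by
  conv_rhs => rw [p.as_sum_support_C_mul_X_pow]
  simp only [antiderivative, Polynomial.sum, map_sum, derivative_C_mul_X_pow]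
  refine Finset.sum_congr rfl fun i _ => ?_
  push_cast
  rw [div_mul_cancel₀ _ (Nat.cast_add_one_ne_zero i)]

theorem degree_antiderivative_lt {p : K[X]} {n : ℕ} (hp : p.degree < n) :
    (antiderivative p).degree < ↑(n + 1) := by
  refine (degree_sum_le _ _).trans_lt <| (Finset.sup_lt_iff (WithBot.bot_lt_coe _)).2 fun i hi => ?_
  have hin : (i : WithBot ℕ) < n := (le_degree_of_ne_zero (mem_support_iff.1 hi)).trans_lt hp
  exact (degree_C_mul_X_pow_le _ _).trans_lt
    (by exact_mod_cast Nat.succ_lt_succ (by exact_mod_cast hin))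

end Polynomial

theorem integral_mul_eval_eq_zero_of_degree_lt {w : ℝ → ℝ} {a b : ℝ}
    (hw : IntervalIntegrable w volume a b) {L : ℕ → ℝ[X]} (hmonic : ∀ k, (L k).Monic)
    (hdeg : ∀ k, (L k).natDegree = k) {n : ℕ}
    (horth : ∀ k < n, ∫ x in a..b, w x * (L n).eval x * (L k).eval x = 0)
    {P : ℝ[X]} (hP : P.degree < n) :
    ∫ x in a..b, w x * (L n).eval x * P.eval x = 0 := by
  let S : Sequence ℝ := ⟨L, fun k => by rw [degree_eq_natDegree (hmonic k).ne_zero, hdeg k]⟩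
  have hspan : P ∈ Submodule.span ℝ (L '' Iio n) := by
    rw [S.span_degreeLT fun k _ => by simp [S, (hmonic k).leadingCoeff]]
    exact mem_degreeLT.2 hP
  clear hP
  have hint (Q : ℝ[X]) : IntervalIntegrable (fun x => w x * (L n).eval x * Q.eval x) volume a b :=
    (hw.mul_continuousOn (L n).continuous.continuousOn).mul_continuousOn Q.continuous.continuousOn
  induction hspan using Submodule.span_induction with
  | mem Q hQ => obtain ⟨k, hk, rfl⟩ := hQ; exact horth k hk
  | zero => simp
  | add Q R _ _ hQ hR =>
    simp only [eval_add, mul_add]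
    rw [integral_add (hint Q) (hint R), hQ, hR, add_zero]
  | smul c Q _ hQ =>
    simp only [eval_smul, smul_eq_mul, mul_left_comm _ c]
    rw [intervalIntegral.integral_const_mul, hQ, mul_zero]

theorem integral_primitive_mul_eq_sub {f G g : ℝ → ℝ} {a b : ℝ} (hab : a ≤ b) {s : Set ℝ}
    (hs : s.Countable) (hf : IntervalIntegrable f volume a b)
    (hfc : ∀ x ∈ Ioo a b \ s, ContinuousAt f x) (hG : ∀ x ∈ Icc a b, HasDerivAt G (g x) x)
    (hg : ContinuousOn g (Icc a b)) :
    ∫ ξ in a..b, (∫ t in a..ξ, f t) * g ξ = (∫ t in a..b, f t) * G b - ∫ ξ in a..b, f ξ * G ξ := by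
  set φ := fun ξ => ∫ t in a..ξ, f t
  have hGc : ContinuousOn G (Icc a b) := fun x hx => (hG x hx).continuousAt.continuousWithinAt
  have hφc : ContinuousOn φ (Icc a b) := by
    simpa [uIcc_of_le hab] using continuousOn_primitive_interval' hf left_mem_uIcc
  have hφd (x : ℝ) (hx : x ∈ Ioo a b \ s) : HasDerivAt φ (f x) x :=
    integral_hasDerivAt_right
      (hf.mono_set (uIcc_subset_uIcc_left (by rw [uIcc_of_le hab]; exact Ioo_subset_Icc_self hx.1)))
      ⟨Ioo a b, Ioo_mem_nhds hx.1.1 hx.1.2,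
        (hf.1.mono_set Ioo_subset_Ioc_self).aestronglyMeasurable⟩
      (hfc x hx)
  have hfG : IntervalIntegrable (fun x => f x * G x) volume a b :=
    hf.mul_continuousOn (by rwa [uIcc_of_le hab])
  have hφg : IntervalIntegrable (fun x => φ x * g x) volume a b :=
    (hφc.mul hg).intervalIntegrable_of_Icc hab
  have hFTC := integral_eq_of_hasDerivAt_off_countable_of_le (fun x => φ x * G x)
    (fun x => f x * G x + φ x * g x) hab hs (hφc.mul hGc)
    (fun x hx => (hφd x hx).mul (hG x (Ioo_subset_Icc_self hx.1))) (hfG.add hφg)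
  rw [integral_add hfG hφg] at hFTC
  simp only [φ, integral_same, zero_mul, sub_zero] at hFTC
  linarith

theorem intervalIntegrable_betaHat_inv (α βm βp a b : ℝ) :
    IntervalIntegrable (fun t => (betaHat α βm βp t)⁻¹) volume a b := by
  have hconst (c : ℝ) (s : Set ℝ) : IntegrableOn (fun _ => c) s (volume.restrict (uIoc a b)) :=
    Integrable.mono_measure (intervalIntegrable_const (c := c)).def' Measure.restrict_le_self
  have : (fun t => (betaHat α βm βp t)⁻¹) = (Iic α).piecewise (fun _ => βm⁻¹) (fun _ => βp⁻¹) := by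
    ext t; simp only [betaHat, Set.piecewise, mem_Iic]; split_ifs <;> rfl
  rw [this, intervalIntegrable_iff]
  exact Integrable.piecewise measurableSet_Iic (hconst _ _) (hconst _ _)

theorem continuousAt_betaHat_inv {α βm βp x : ℝ} (hx : x ≠ α) :
    ContinuousAt (fun t => (betaHat α βm βp t)⁻¹) x := by
  rcases hx.lt_or_gt with h | h
  · refine (continuousAt_const (y := βm⁻¹)).congr ?_
    filter_upwards [Iio_mem_nhds h] with t (ht : t < α)
    simp [betaHat, ht.le]
  · refine (continuousAt_const (y := βp⁻¹)).congr ?_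
    filter_upwards [Ioi_mem_nhds h] with t (ht : α < t)
    simp [betaHat, not_le.mpr ht]

theorem generalized_lobatto_orthogonal_to_low_degree_general
    (α βm βp : ℝ)
    (L : ℕ → Polynomial ℝ) (hmonic : ∀ k, (L k).Monic) (hdeg : ∀ k, (L k).natDegree = k)
    (horth : ∀ j k, j ≠ k →
      ∫ x in (-1 : ℝ)..1, (betaHat α βm βp x)⁻¹ * (L j).eval x * (L k).eval x = 0)
    (n : ℕ) :
    ∀ v : Polynomial ℝ, v.degree < ((n - 1 : ℕ) : WithBot ℕ) →
      ∫ ξ in (-1 : ℝ)..1,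
        (∫ t in (-1 : ℝ)..ξ, (betaHat α βm βp t)⁻¹ * (L n).eval t) * v.eval ξ = 0 := by
  intro v hv
  rcases Nat.eq_zero_or_pos n with rfl | hn
  · simp [show v = 0 by simpa using hv]
  -- normalized by `V 1 = 0`, which kills the boundary term of the integration by parts
  set V := antiderivative v - C ((antiderivative v).eval 1)
  have hV (x : ℝ) : HasDerivAt (fun ξ => V.eval ξ) (v.eval x) x := by
    simpa [V, derivative_antiderivative] using V.hasDerivAt x
  have hVdeg : V.degree < n :=
    calc V.degree ≤ max (antiderivative v).degree (C _).degree := degree_sub_le _ _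
      _ < ↑(n - 1 + 1) := max_lt (degree_antiderivative_lt hv)
          (degree_C_le.trans_lt (by exact_mod_cast Nat.succ_pos _))
      _ = n := by rw [Nat.sub_add_cancel hn]
  rw [integral_primitive_mul_eq_sub (by norm_num) (countable_singleton α)
    ((intervalIntegrable_betaHat_inv α βm βp _ _).mul_continuousOn (L n).continuous.continuousOn)
    (fun x hx => (continuousAt_betaHat_inv hx.2).mul (L n).continuous.continuousAt)
    (fun x _ => hV x) v.continuous.continuousOn, show V.eval 1 = 0 by simp [V], mul_zero,
    zero_sub, neg_eq_zero]
  exact integral_mul_eval_eq_zero_of_degree_lt (intervalIntegrable_betaHat_inv α βm βp _ _)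
    hmonic hdeg (fun k hk => horth n k hk.ne') hVdeg

theorem generalized_lobatto_orthogonal_to_low_degree
    (α βm βp : ℝ) (hα : α ∈ Set.Ioo (-1 : ℝ) 1) (hβm : 0 < βm) (hβp : 0 < βp)
    (L : ℕ → Polynomial ℝ) (hmonic : ∀ k, (L k).Monic) (hdeg : ∀ k, (L k).natDegree = k)
    (horth : ∀ j k, j ≠ k →
      ∫ x in (-1 : ℝ)..1, (betaHat α βm βp x)⁻¹ * (L j).eval x * (L k).eval x = 0)
    (n : ℕ) (hn : 1 ≤ n) :
    ∀ v : Polynomial ℝ, v.degree < ((n - 1 : ℕ) : WithBot ℕ) →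
      ∫ ξ in (-1 : ℝ)..1,
        (∫ t in (-1 : ℝ)..ξ, (betaHat α βm βp t)⁻¹ * (L n).eval t) * v.eval ξ = 0 :=
  generalized_lobatto_orthogonal_to_low_degree_general α βm βp L hmonic hdeg horth n
end

section
/- Under the hypotheses of the preceding statement (pure diffusion interface problem, Galerkin solution u_h in the IFE space S_p with p ≥ 1, and I_h u the Ritz-type interpolant satisfying the energy orthogonality elementwise), the IFE solution is exact at all mesh points: (u - u_h)(x_i) = 0 for i = 0, 1, …, N. -/
/-!
Both `I_h u` and `u_h` lie in `S`, so the orthogonality `∫ β (u - I_h u)' v' = 0`, the discrete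
equation `∫ β u_h' v' = ∫ f v` and the weak form `∫ β u' v' = ∫ f v` of the strong equation give
`∫ β ((I_h u)' - u_h')² = 0`. As `β > 0`, the primitives `I_h u` and `u_h` agree on `[a, b]`, and
`I_h u` interpolates `u` at the mesh points.

The weak form is an integration by parts against the flux `g = β u'`, whose derivative `-f` need
not be integrable: only `f v` is. On a compact interval where `v ≠ 0`, `|f| ≤ |f v| / min |v|` is
integrable and the integration by parts goes through; these pieces are summed over the countably
many components of `{v ≠ 0}`, each of which has endpoints where `g v = 0`. On `{v = 0}` the
integrand `g v' - f v` vanishes a.e., because `v' = 0` a.e. on a level set of `v`.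
-/

open MeasureTheory intervalIntegral
open Set Filter Topology

theorem ae_hasDerivAt_of_eqOn_primitive {a b c : ℝ} {v v' : ℝ → ℝ}
    (hv' : IntervalIntegrable v' volume a b) (hv : ∀ x ∈ Icc a b, v x = c + ∫ t in a..x, v' t) :
    ∀ᵐ x, x ∈ Ioo a b → HasDerivAt v (v' x) x := by
  filter_upwards [hv'.ae_hasDerivAt_integral] with x hx hxab
  have hmem : x ∈ uIcc a b := by
    rw [uIcc_of_le (hxab.1.le.trans hxab.2.le)]; exact Ioo_subset_Icc_self hxab
  refine ((hx hmem a left_mem_uIcc).const_add c).congr_of_eventuallyEq ?_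
  filter_upwards [isOpen_Ioo.mem_nhds hxab] with y hy using hv y (Ioo_subset_Icc_self hy)

theorem eq_add_integral_of_eq_integral {a b p : ℝ} {v v' : ℝ → ℝ}
    (hv' : IntervalIntegrable v' volume a b) (hv : ∀ x ∈ Icc a b, v x = ∫ t in a..x, v' t)
    (hp : p ∈ Icc a b) : ∀ x ∈ Icc a b, v x = v p + ∫ t in p..x, v' t := fun x hx => by
  have hsub : ∀ y ∈ Icc a b, IntervalIntegrable v' volume a y := fun y hy =>
    hv'.mono_set (uIcc_subset_uIcc left_mem_uIcc (uIcc_of_le (hp.1.trans hp.2) ▸ hy))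
  rw [hv x hx, hv p hp, ← integral_interval_sub_left (hsub x hx) (hsub p hp)]
  ring

-- At a point of the level set that is not isolated from the right in it, all slopes along the
-- level set vanish; the right-isolated points are countably many.
theorem ae_eq_zero_of_hasDerivAt_of_eq {v v' : ℝ → ℝ} {s : Set ℝ} (c : ℝ)
    (h : ∀ᵐ x, x ∈ s → HasDerivAt v (v' x) x) : ∀ᵐ x, x ∈ s → v x = c → v' x = 0 := by
  set Z := v ⁻¹' {c}
  filter_upwards [h, (countable_setOfPred_isolated_right_within (s := Z)).ae_notMem volume]
    with x hx hiso hxs hxZ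
  have hacc : (𝓝[Z ∩ Ioi x] x).NeBot := neBot_iff.2 fun hbot => hiso ⟨hxZ, hbot⟩
  have hconst : HasDerivWithinAt v 0 (Z ∩ Ioi x) x :=
    (hasDerivWithinAt_const x _ c).congr (fun y hy => hy.1) hxZ
  refine UniqueDiffWithinAt.eq_deriv _ ?_ (hx hxs).hasDerivWithinAt hconst
  rw [uniqueDiffWithinAt_iff_accPt, accPt_principal_iff_nhdsWithin]
  simpa [sdiff_singleton_eq_self (fun h : x ∈ Z ∩ Ioi x => lt_irrefl x h.2)] using hacc

theorem integral_mul_add_mul_eq_sub_of_eqOn_primitive {p q : ℝ} {G G' V V' : ℝ → ℝ}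
    (hpq : p ≤ q) (hG' : IntervalIntegrable G' volume p q) (hV' : IntervalIntegrable V' volume p q)
    (hG : ∀ x ∈ Icc p q, G x = G p + ∫ t in p..x, G' t)
    (hV : ∀ x ∈ Icc p q, V x = V p + ∫ t in p..x, V' t) :
    ∫ x in p..q, (G' x * V x + G x * V' x) = G q * V q - G p * V p := by
  have hAC : ∀ {c : ℝ} {W' : ℝ → ℝ}, IntervalIntegrable W' volume p q →
      AbsolutelyContinuousOnInterval (fun x => c + ∫ t in p..x, W' t) p q := fun hW' =>
    contDiffOn_const.absolutelyContinuousOnInterval.fun_add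
      (hW'.absolutelyContinuousOnInterval_intervalIntegral left_mem_uIcc)
  have hIBP := (hAC (c := G p) hG').integral_deriv_mul_eq_sub (hAC (c := V p) hV')
  rw [← hG q ⟨hpq, le_rfl⟩, ← hV q ⟨hpq, le_rfl⟩, ← hG p ⟨le_rfl, hpq⟩,
    ← hV p ⟨le_rfl, hpq⟩] at hIBP
  rw [← hIBP]
  refine integral_congr_ae ?_
  filter_upwards [ae_hasDerivAt_of_eqOn_primitive hG' (fun _ _ => rfl),
    ae_hasDerivAt_of_eqOn_primitive hV' (fun _ _ => rfl), (countable_singleton q).ae_notMem volume]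
    with x hGx hVx hxq hx
  rw [uIoc_of_le hpq] at hx
  have hxI : x ∈ Ioo p q := ⟨hx.1, hx.2.lt_of_ne hxq⟩
  rw [(hGx hxI).deriv, (hVx hxI).deriv, ← hG x (Ioc_subset_Icc_self hx),
    ← hV x (Ioc_subset_Icc_self hx)]

theorem integral_mul_sub_mul_eq_of_hasDerivAt {p q : ℝ} {s : Set ℝ} {g f v v' : ℝ → ℝ}
    (hpq : p ≤ q) (hs : s.Countable) (hg : ContinuousOn g (Icc p q))
    (hgf : ∀ x ∈ Ioo p q \ s, HasDerivAt g (-f x) x) (hf : IntervalIntegrable f volume p q)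
    (hv' : IntervalIntegrable v' volume p q) (hv : ∀ x ∈ Icc p q, v x = v p + ∫ t in p..x, v' t) :
    ∫ x in p..q, (g x * v' x - f x * v x) = g q * v q - g p * v p := by
  have hG : ∀ x ∈ Icc p q, g x = g p + ∫ t in p..x, -f t := fun x hx => by
    have hsub : Icc p x ⊆ Icc p q := Icc_subset_Icc le_rfl hx.2
    rw [integral_eq_of_hasDerivAt_off_countable_of_le g (fun t => -f t) hx.1 hs (hg.mono hsub)
      (fun y hy => hgf y ⟨Ioo_subset_Ioo_right hx.2 hy.1, hy.2⟩)
      (hf.neg.mono_set (by rw [uIcc_of_le hpq, uIcc_of_le hx.1]; exact hsub))]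
    ring
  rw [← integral_mul_add_mul_eq_sub_of_eqOn_primitive hpq hf.neg hv' hG hv]
  congr 1 with x
  rw [Pi.neg_apply]
  ring

theorem integral_mul_sub_mul_eq_of_ne_zero {p q : ℝ} {s : Set ℝ} {g f v v' : ℝ → ℝ}
    (hpq : p ≤ q) (hs : s.Countable) (hg : ContinuousOn g (Icc p q))
    (hgf : ∀ x ∈ Ioo p q \ s, HasDerivAt g (-f x) x)
    (hfv : IntegrableOn (fun x => f x * v x) (Icc p q)) (hv' : IntervalIntegrable v' volume p q)
    (hv : ∀ x ∈ Icc p q, v x = v p + ∫ t in p..x, v' t) (hv0 : ∀ x ∈ Icc p q, v x ≠ 0) :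
    ∫ x in p..q, (g x * v' x - f x * v x) = g q * v q - g p * v p := by
  have hvc : ContinuousOn v (Icc p q) :=
    (uIcc_of_le hpq ▸ (continuousOn_const.add (continuousOn_primitive_interval
      ((intervalIntegrable_iff' (f := v')).1 hv')))).congr hv
  obtain ⟨z, hz, hzmin⟩ := isCompact_Icc.exists_isMinOn (nonempty_Icc.2 hpq) hvc.abs
  have hvz : 0 < |v z| := abs_pos.2 (hv0 z hz)
  have hfm : AEStronglyMeasurable f (volume.restrict (Icc p q)) := by
    refine (measurable_deriv g).neg.aestronglyMeasurable.congr ?_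
    rw [EventuallyEq, ← restrict_Ioo_eq_restrict_Icc, ae_restrict_iff' measurableSet_Ioo]
    filter_upwards [hs.ae_notMem volume] with x hxs hx
    rw [Pi.neg_apply, (hgf x ⟨hx, hxs⟩).deriv, neg_neg]
  have hf : IntegrableOn f (Icc p q) := by
    refine Integrable.mono' (hfv.norm.const_mul |v z|⁻¹) hfm ?_
    rw [ae_restrict_iff' measurableSet_Icc]
    refine ae_of_all _ fun x hx => ?_
    rw [Real.norm_eq_abs, Real.norm_eq_abs, abs_mul, inv_mul_eq_div, le_div_iff₀ hvz]
    exact mul_le_mul_of_nonneg_left (hzmin hx) (abs_nonneg _)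
  exact integral_mul_sub_mul_eq_of_hasDerivAt hpq hs hg hgf
    ((intervalIntegrable_iff_integrableOn_Icc_of_le hpq).2 hf) hv' hv

theorem exists_connectedComponentIn_eq_Ioo {U : Set ℝ} (hU : IsOpen U) (hb : BddBelow U)
    (ha : BddAbove U) {x : ℝ} (hx : x ∈ U) :
    ∃ c d, connectedComponentIn U x = Ioo c d ∧ c ∉ U ∧ d ∉ U := by
  set C := connectedComponentIn U x
  have hCU : C ⊆ U := connectedComponentIn_subset U x
  have hCo : IsOpen C := hU.connectedComponentIn
  have hCc : IsConnected C := isConnected_connectedComponentIn_iff.2 hx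
  have hCb : BddBelow C := hb.mono hCU
  have hCa : BddAbove C := ha.mono hCU
  have hc : sInf C ∉ C := fun h => by
    obtain ⟨y, hy, hyC⟩ := Filter.Eventually.exists_lt (hCo.mem_nhds h)
    exact (csInf_le hCb hyC).not_gt hy
  have hd : sSup C ∉ C := fun h => by
    obtain ⟨y, hy, hyC⟩ := Filter.Eventually.exists_gt (hCo.mem_nhds h)
    exact (le_csSup hCa hyC).not_gt hy
  have hCeq : C = Ioo (sInf C) (sSup C) := by
    refine (hCc.Ioo_csInf_csSup_subset hCb hCa).antisymm' fun y hy => ?_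
    exact ⟨(csInf_le hCb hy).lt_of_ne (ne_of_mem_of_not_mem hy hc).symm,
      (le_csSup hCa hy).lt_of_ne (ne_of_mem_of_not_mem hy hd)⟩
  have hmax : ∀ e ∈ closure C, e ∈ U → e ∈ C := fun e he heU =>
    (hCc.isPreconnected.subset_closure (subset_insert e C) (insert_subset he subset_closure)
      |>.subset_connectedComponentIn (mem_insert_of_mem e (mem_connectedComponentIn hx))
      (insert_subset heU hCU)) (mem_insert e C)
  exact ⟨_, _, hCeq, fun h => hc (hmax _ (csInf_mem_closure hCc.nonempty hCb) h),
    fun h => hd (hmax _ (csSup_mem_closure hCc.nonempty hCa) h)⟩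

theorem setIntegral_eq_zero_of_forall_Ioo {U : Set ℝ} (hU : IsOpen U) (hb : BddBelow U)
    (ha : BddAbove U) {ψ : ℝ → ℝ} (hψ : IntegrableOn ψ U)
    (h : ∀ c d, Ioo c d ⊆ U → c ∉ U → d ∉ U → ∫ x in Ioo c d, ψ x = 0) :
    ∫ x in U, ψ x = 0 := by
  set 𝒞 := connectedComponentIn U '' U
  have hdisj : 𝒞.PairwiseDisjoint id := by
    rintro _ ⟨x, -, rfl⟩ _ ⟨y, -, rfl⟩ hne
    refine Set.disjoint_left.2 fun z hzx hzy => hne ?_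
    rw [connectedComponentIn_eq hzx, connectedComponentIn_eq hzy]
  have : Countable 𝒞 := (hdisj.countable_of_isOpen
    (by rintro _ ⟨x, -, rfl⟩; exact hU.connectedComponentIn)
    (by rintro _ ⟨x, hx, rfl⟩; exact ⟨x, mem_connectedComponentIn hx⟩)).to_subtype
  have hUeq : U = ⋃ C : 𝒞, (C : Set ℝ) := by
    rw [← sUnion_eq_iUnion, sUnion_image]
    exact subset_antisymm (fun x hx => mem_biUnion hx (mem_connectedComponentIn hx))
      (iUnion₂_subset fun x _ => connectedComponentIn_subset U x)
  rw [hUeq, integral_iUnion (s := fun C : 𝒞 => (C : Set ℝ)) (fun C => ?_)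
    (fun C D hCD => hdisj C.2 D.2 (Subtype.coe_ne_coe.2 hCD)) (hUeq ▸ hψ)]
  · refine (tsum_congr fun ⟨_, x, hx, hC⟩ => ?_).trans tsum_zero
    obtain ⟨c, d, hcd, hc, hd⟩ := exists_connectedComponentIn_eq_Ioo hU hb ha hx
    simp only [← hC, hcd]
    exact h c d (hcd ▸ connectedComponentIn_subset U x) hc hd
  · obtain ⟨_, x, -, rfl⟩ := C
    exact hU.connectedComponentIn.measurableSet

theorem setIntegral_Ioo_eq_sub_of_forall_integral_eq {c d : ℝ} {ψ F : ℝ → ℝ} (hcd : c < d)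
    (hψ : IntegrableOn ψ (Ioo c d)) (hF : ContinuousOn F (Icc c d))
    (h : ∀ p q, c < p → p ≤ q → q < d → ∫ x in p..q, ψ x = F q - F p) :
    ∫ x in Ioo c d, ψ x = F d - F c := by
  have hψ' : IntegrableOn ψ (uIcc c d) := by
    rwa [uIcc_of_le hcd.le, integrableOn_Icc_iff_integrableOn_Ioo]
  set H := fun x => F x - ∫ t in c..x, ψ t
  have hH : ContinuousOn H (Icc c d) := by
    rw [← uIcc_of_le hcd.le] at hF ⊢
    exact hF.sub (continuousOn_primitive_interval hψ')
  have hint : ∀ z ∈ Ioo c d, IntervalIntegrable ψ volume c z := fun z hz =>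
    (hψ'.mono_set (uIcc_subset_uIcc left_mem_uIcc
      (uIcc_of_le hcd.le ▸ Ioo_subset_Icc_self hz))).intervalIntegrable
  have hmono : ∀ x ∈ Ioo c d, ∀ y ∈ Ioo c d, x ≤ y → H x = H y := fun x hx y hy hxy => by
    have := integral_interval_sub_left (hint y hy) (hint x hx)
    rw [h x y hx.1 hxy hy.2] at this
    simp only [H]
    linarith
  obtain ⟨m, hm⟩ := nonempty_Ioo.2 hcd
  have hconst : EqOn H (fun _ => H m) (Ioo c d) := fun x hx =>
    (le_total x m).elim (hmono x hx m hm) fun hmx => (hmono m hm x hx hmx).symm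
  have := hconst.of_subset_closure hH continuousOn_const Ioo_subset_Icc_self
    (closure_Ioo hcd.ne).ge
  have hHcd := (this ⟨le_rfl, hcd.le⟩).trans (this ⟨hcd.le, le_rfl⟩).symm
  simp only [H, integral_same, sub_zero] at hHcd
  rw [← integral_Ioc_eq_integral_Ioo, ← integral_of_le hcd.le]
  linarith

theorem setIntegral_eq_zero_of_forall_Icc_subset {a b : ℝ} {U : Set ℝ} {ψ F : ℝ → ℝ}
    (hU : IsOpen U) (hUab : U ⊆ Ioo a b) (hψ : IntegrableOn ψ U) (hF : ContinuousOn F (Icc a b))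
    (hF0 : ∀ x ∈ Icc a b, x ∉ U → F x = 0)
    (h : ∀ p q, p ≤ q → Icc p q ⊆ U → ∫ x in p..q, ψ x = F q - F p) :
    ∫ x in U, ψ x = 0 := by
  refine setIntegral_eq_zero_of_forall_Ioo hU (bddBelow_Ioo.mono hUab) (bddAbove_Ioo.mono hUab) hψ
    fun c d hcdU hc hd => ?_
  rcases le_or_gt d c with hdc | hcd
  · rw [Ioo_eq_empty_of_le hdc, setIntegral_empty]
  have hcd_ab : Icc c d ⊆ Icc a b :=
    (Icc_subset_Icc_iff hcd.le).2 ((Ioo_subset_Ioo_iff hcd).1 (hcdU.trans hUab))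
  rw [setIntegral_Ioo_eq_sub_of_forall_integral_eq hcd (hψ.mono_set hcdU) (hF.mono hcd_ab)
    fun p q hcp hpq hqd => h p q hpq ((Icc_subset_Ioo hcp hqd).trans hcdU),
    hF0 c (hcd_ab ⟨le_rfl, hcd.le⟩) hc, hF0 d (hcd_ab ⟨hcd.le, le_rfl⟩) hd, sub_zero]

theorem integral_mul_eq_integral_mul_of_hasDerivAt {a b : ℝ} {s : Set ℝ} {g f v v' : ℝ → ℝ}
    (hab : a ≤ b) (hs : s.Countable) (hg : ContinuousOn g (Icc a b))
    (hgf : ∀ x ∈ Ioo a b \ s, HasDerivAt g (-f x) x) (hv' : IntervalIntegrable v' volume a b)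
    (hv : ∀ x ∈ Icc a b, v x = ∫ t in a..x, v' t) (hvb : v b = 0)
    (hfv : IntervalIntegrable (fun x => f x * v x) volume a b) :
    ∫ x in a..b, g x * v' x = ∫ x in a..b, f x * v x := by
  have hvc : ContinuousOn v (Icc a b) := (uIcc_of_le hab ▸ continuousOn_primitive_interval
    ((intervalIntegrable_iff' (f := v')).1 hv')).congr hv
  have hva : v a = 0 := by simpa using hv a ⟨le_rfl, hab⟩
  set ψ := fun x => g x * v' x - f x * v x
  have hgv' : IntervalIntegrable (fun x => g x * v' x) volume a b :=
    hv'.continuousOn_mul (uIcc_of_le hab ▸ hg)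
  have hψ : IntegrableOn ψ (Ioo a b) :=
    (hgv'.sub hfv).def'.mono_set (by rw [uIoc_of_le hab]; exact Ioo_subset_Ioc_self)
  suffices ∫ x in Ioo a b, ψ x = 0 by
    rw [← sub_eq_zero, ← integral_sub hgv' hfv, integral_of_le hab, integral_Ioc_eq_integral_Ioo]
    exact this
  set U := Ioo a b ∩ v ⁻¹' {0}ᶜ
  have hU : IsOpen U :=
    (hvc.mono Ioo_subset_Icc_self).isOpen_inter_preimage isOpen_Ioo isOpen_compl_singleton
  have hZ : ∀ x ∈ Icc a b, x ∉ U → v x = 0 := fun x hx hxU => by_contra fun hne =>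
    hxU ⟨⟨hx.1.lt_of_ne (by rintro rfl; exact hne hva),
      hx.2.lt_of_ne (by rintro rfl; exact hne hvb)⟩, hne⟩
  have hoff : ∫ x in Ioo a b \ U, ψ x = 0 := by
    have hdiff : ∀ᵐ x, x ∈ Ioo a b → HasDerivAt v (v' x) x :=
      ae_hasDerivAt_of_eqOn_primitive hv' (c := 0) fun x hx => by rw [zero_add]; exact hv x hx
    refine integral_eq_zero_of_ae ?_
    rw [EventuallyEq, ae_restrict_iff' (measurableSet_Ioo.diff hU.measurableSet)]
    filter_upwards [ae_eq_zero_of_hasDerivAt_of_eq 0 hdiff] with x hx hxZ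
    have hvx := hZ x (Ioo_subset_Icc_self hxZ.1) hxZ.2
    simp [ψ, hvx, hx hxZ.1 hvx]
  have hon : ∫ x in U, ψ x = 0 := by
    refine setIntegral_eq_zero_of_forall_Icc_subset hU inter_subset_left
      (hψ.mono_set inter_subset_left) (hg.mul hvc) (fun x hx hxU => by simp [hZ x hx hxU])
      fun p q hpq hpqU => ?_
    have hpq_ab : Icc p q ⊆ Icc a b := (hpqU.trans inter_subset_left).trans Ioo_subset_Icc_self
    have hpI : p ∈ Icc a b := hpq_ab ⟨le_rfl, hpq⟩
    exact integral_mul_sub_mul_eq_of_ne_zero hpq hs (hg.mono hpq_ab)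
      (fun x hx => hgf x ⟨(hpqU (Ioo_subset_Icc_self hx.1)).1, hx.2⟩)
      (((intervalIntegrable_iff_integrableOn_Icc_of_le hab).1 hfv).mono_set hpq_ab)
      (hv'.mono_set (uIcc_subset_uIcc (uIcc_of_le hab ▸ hpI)
        (uIcc_of_le hab ▸ hpq_ab ⟨hpq, le_rfl⟩)))
      (fun x hx => eq_add_integral_of_eq_integral hv' hv hpI x (hpq_ab hx))
      (fun x hx => (hpqU hx).2)
  rw [← integral_inter_add_sdiff hU.measurableSet hψ, inter_eq_right.2 inter_subset_left, hon,
    hoff, add_zero]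
theorem intervalIntegrable_of_mul_mul_self {a b m : ℝ} {β h : ℝ → ℝ} (hm : 0 < m)
    (hβ : ∀ x, m ≤ β x) (hh : AEStronglyMeasurable h)
    (hi : IntervalIntegrable (fun x => β x * h x * h x) volume a b) :
    IntervalIntegrable h volume a b := by
  refine ((intervalIntegrable_const (c := 1)).add (hi.const_mul m⁻¹)).mono_fun
    hh.restrict (ae_of_all _ fun x => ?_)
  have hq : h x ^ 2 ≤ m⁻¹ * (β x * h x * h x) := by
    rw [inv_mul_eq_div, le_div_iff₀ hm]
    nlinarith [hβ x, sq_nonneg (h x)]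
  have h1 : |h x| ≤ 1 + h x ^ 2 := by nlinarith [sq_abs (h x), sq_nonneg (|h x| - 1)]
  simp only [Real.norm_eq_abs]
  rw [abs_of_nonneg (by nlinarith [sq_nonneg (h x)] : (0 : ℝ) ≤ 1 + m⁻¹ * (β x * h x * h x))]
  linarith

theorem ae_eq_of_integral_mul_sub_mul_eq_zero {a b : ℝ} {β φ ψ : ℝ → ℝ} (hab : a ≤ b)
    (hβ : ∀ x, 0 < β x)
    (hφ : IntervalIntegrable (fun x => β x * (φ x - ψ x) * φ x) volume a b)
    (hψ : IntervalIntegrable (fun x => β x * (φ x - ψ x) * ψ x) volume a b)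
    (hφ0 : ∫ x in a..b, β x * (φ x - ψ x) * φ x = 0)
    (hψ0 : ∫ x in a..b, β x * (φ x - ψ x) * ψ x = 0) :
    φ =ᵐ[volume.restrict (Ioc a b)] ψ := by
  have hsplit : (fun x => β x * (φ x - ψ x) * (φ x - ψ x)) =
      fun x => β x * (φ x - ψ x) * φ x - β x * (φ x - ψ x) * ψ x := by
    ext x; ring
  have hnn : ∀ x, 0 ≤ β x * (φ x - ψ x) * (φ x - ψ x) := fun x => by
    rw [mul_assoc]; exact mul_nonneg (hβ x).le (mul_self_nonneg _)
  have henergy : ∫ x in Ioc a b, β x * (φ x - ψ x) * (φ x - ψ x) = 0 := by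
    rw [← integral_of_le hab, hsplit, integral_sub hφ hψ, hφ0, hψ0, sub_zero]
  rw [integral_eq_zero_iff_of_nonneg hnn
    ((intervalIntegrable_iff_integrableOn_Ioc_of_le hab).1 (hsplit ▸ hφ.sub hψ))] at henergy
  filter_upwards [henergy] with x hx
  simpa [(hβ x).ne', sub_eq_zero] using hx

theorem eqOn_of_eq_primitive_of_ae_eq {a b : ℝ} {v w v' w' : ℝ → ℝ}
    (hv : ∀ x ∈ Icc a b, v x = ∫ t in a..x, v' t) (hw : ∀ x ∈ Icc a b, w x = ∫ t in a..x, w' t)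
    (h : v' =ᵐ[volume.restrict (Ioc a b)] w') : EqOn v w (Icc a b) := fun x hx => by
  rw [hv x hx, hw x hx]
  refine integral_congr_ae ?_
  rw [EventuallyEq, ae_restrict_iff' measurableSet_Ioc] at h
  filter_upwards [h] with t ht htI
  rw [uIoc_of_le hx.1] at htI
  exact ht ⟨htI.1, htI.2.trans hx.2⟩

theorem ife_exact_at_mesh_points_general
    (a b α : ℝ) (hab : a < b)
    (βm βp : ℝ) (hβm : 0 < βm) (hβp : 0 < βp)
    (β : ℝ → ℝ) (hβ : ∀ x, β x = if x < α then βm else βp)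
    (u f : ℝ → ℝ)
    (hflux_cont : ContinuousOn (fun x => β x * deriv u x) (Set.Icc a b))
    (hstrong : ∀ x ∈ Set.Ioo a b, x ≠ α →
      HasDerivAt (fun y => β y * deriv u y) (-(f x)) x)
    (S : Submodule ℝ (ℝ → ℝ))
    (hS0 : ∀ v ∈ S, v a = 0 ∧ v b = 0 ∧ ContinuousOn v (Set.Icc a b) ∧
      ∀ x ∈ Set.Icc a b, v x = ∫ t in a..x, deriv v t)
    (hSint : ∀ v ∈ S, ∀ w ∈ S,
      IntervalIntegrable (fun x => β x * deriv v x * deriv w x) volume a b)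
    (hSu : ∀ v ∈ S, IntervalIntegrable (fun x => β x * deriv u x * deriv v x) volume a b)
    (hfv : ∀ v ∈ S, IntervalIntegrable (fun x => f x * v x) volume a b)
    (Ihu : ℝ → ℝ) (hIhu : Ihu ∈ S)
    (horth : ∀ v ∈ S, ∫ x in a..b, β x * (deriv u x - deriv Ihu x) * deriv v x = 0)
    (uh : ℝ → ℝ) (huh : uh ∈ S)
    (hGal : ∀ v ∈ S, ∫ x in a..b, β x * deriv uh x * deriv v x = ∫ x in a..b, f x * v x)
    (N : ℕ) (xm : Fin (N + 1) → ℝ) (hmono : StrictMono xm)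
    (hx0 : xm 0 = a) (hxN : xm (Fin.last N) = b)
    (hinterp : ∀ i, Ihu (xm i) = u (xm i)) :
    ∀ i, u (xm i) - uh (xm i) = 0 := by
  intro i
  have hβpos : ∀ x, 0 < β x := fun x => by rw [hβ x]; split_ifs <;> assumption
  have hweak : ∀ w ∈ S, ∫ x in a..b, β x * deriv u x * deriv w x = ∫ x in a..b, f x * w x :=
    fun w hw => integral_mul_eq_integral_mul_of_hasDerivAt hab.le (countable_singleton α)
      hflux_cont (fun x hx => hstrong x hx.1 hx.2)
      (intervalIntegrable_of_mul_mul_self (lt_min hβm hβp)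
        (fun x => by rw [hβ x]; split_ifs <;> simp)
        (measurable_deriv w).aestronglyMeasurable (hSint w hw w hw))
      (hS0 w hw).2.2.2 (hS0 w hw).2.1 (hfv w hw)
  have hgal : ∀ w ∈ S,
      IntervalIntegrable (fun x => β x * (deriv Ihu x - deriv uh x) * deriv w x) volume a b ∧
      ∫ x in a..b, β x * (deriv Ihu x - deriv uh x) * deriv w x = 0 := fun w hw => by
    have hI := hSint Ihu hIhu w hw
    have hU := hSint uh huh w hw
    have horth' := horth w hw
    simp only [mul_sub, sub_mul] at horth' ⊢
    rw [integral_sub (hSu w hw) hI] at horth'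
    refine ⟨hI.sub hU, ?_⟩
    rw [integral_sub hI hU, hGal w hw, ← hweak w hw]
    linarith
  have hxi : xm i ∈ Icc a b :=
    ⟨hx0 ▸ hmono.monotone (Fin.zero_le i), hxN ▸ hmono.monotone (Fin.le_last i)⟩
  rw [← hinterp i, sub_eq_zero]
  exact eqOn_of_eq_primitive_of_ae_eq (hS0 Ihu hIhu).2.2.2 (hS0 uh huh).2.2.2
    (ae_eq_of_integral_mul_sub_mul_eq_zero hab.le hβpos (hgal Ihu hIhu).1 (hgal uh huh).1
      (hgal Ihu hIhu).2 (hgal uh huh).2) hxi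

/-- For the pure diffusion interface problem, the IFE Galerkin solution is exact at all
mesh points, since `u_h = I_h u` and the interpolant matches `u` at the mesh points. -/
theorem ife_exact_at_mesh_points
    (a b α : ℝ) (hab : a < b) (hα : α ∈ Set.Ioo a b)
    (βm βp : ℝ) (hβm : 0 < βm) (hβp : 0 < βp)
    (β : ℝ → ℝ) (hβ : ∀ x, β x = if x < α then βm else βp)
    (u f : ℝ → ℝ)
    (hu_cont : ContinuousOn u (Set.Icc a b))
    (hua : u a = 0) (hub : u b = 0)
    (hu_diff : ∀ x ∈ Set.Ioo a b, x ≠ α → DifferentiableAt ℝ u x)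
    (hflux_cont : ContinuousOn (fun x => β x * deriv u x) (Set.Icc a b))
    (hstrong : ∀ x ∈ Set.Ioo a b, x ≠ α →
      HasDerivAt (fun y => β y * deriv u y) (-(f x)) x)
    (S : Submodule ℝ (ℝ → ℝ)) (hfin : FiniteDimensional ℝ S)
    (hS0 : ∀ v ∈ S, v a = 0 ∧ v b = 0 ∧ ContinuousOn v (Set.Icc a b) ∧
      ∀ x ∈ Set.Icc a b, v x = ∫ t in a..x, deriv v t)
    (hSint : ∀ v ∈ S, ∀ w ∈ S,
      IntervalIntegrable (fun x => β x * deriv v x * deriv w x) volume a b)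
    (hSu : ∀ v ∈ S, IntervalIntegrable (fun x => β x * deriv u x * deriv v x) volume a b)
    (hfv : ∀ v ∈ S, IntervalIntegrable (fun x => f x * v x) volume a b)
    (Ihu : ℝ → ℝ) (hIhu : Ihu ∈ S)
    (horth : ∀ v ∈ S, ∫ x in a..b, β x * (deriv u x - deriv Ihu x) * deriv v x = 0)
    (uh : ℝ → ℝ) (huh : uh ∈ S)
    (hGal : ∀ v ∈ S, ∫ x in a..b, β x * deriv uh x * deriv v x = ∫ x in a..b, f x * v x)
    (N : ℕ) (xm : Fin (N + 1) → ℝ) (hmono : StrictMono xm)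
    (hx0 : xm 0 = a) (hxN : xm (Fin.last N) = b)
    (hinterp : ∀ i, Ihu (xm i) = u (xm i)) :
    ∀ i, u (xm i) - uh (xm i) = 0 :=
  ife_exact_at_mesh_points_general a b α hab βm βp hβm hβp β hβ u f hflux_cont hstrong S hS0 hSint
    hSu hfv Ihu hIhu horth uh huh hGal N xm hmono hx0 hxN hinterp
end
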